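/- arXiv:2602.14163 — 5 statements merged into one kernel-verified Lean document; each statement's English description precedes it below -/
import Mathlib

section
/- For n ≥ 3, the domination number of the square of the path graph P_n^2 equals ⌈n/5⌉. -/
open MvPolynomial CategoryTheory

noncomputable section

/-- The square of the path graph on `n` vertices: vertices indexed by `Fin n`,
with vertex `i` adjacent to vertex `j` iff `1 ≤ |i - j| ≤ 2`. -/
def pathSq (n : ℕ) : SimpleGraph (Fin n) where
  Adj i j := i ≠ j ∧ (i : ℕ) ≤ (j : ℕ) + 2 ∧ (j : ℕ) ≤ (i : ℕ) + 2
  symm := ⟨by intro i j h; exact ⟨h.1.symm, h.2.2, h.2.1⟩⟩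
  loopless := ⟨by intro i h; exact h.1 rfl⟩

/-- `M` is a dominating set of `G`: every vertex is in `M` or adjacent to a vertex of `M`. -/
def IsDominatingSet {V : Type*} (G : SimpleGraph V) (M : Finset V) : Prop :=
  ∀ v, v ∈ M ∨ ∃ u ∈ M, G.Adj u v

/-- The domination number: the minimum size of a dominating set. -/
def dominationNumber {V : Type*} (G : SimpleGraph V) : ℕ :=
  sInf {r | ∃ M : Finset V, IsDominatingSet G M ∧ M.card = r}

/-- For `n ≥ 3`, the domination number of the square of the path graph equals `⌈n/5⌉`. -/
theorem dominationNumber_pathSq (n : ℕ) (hn : 3 ≤ n) :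
    dominationNumber (pathSq n) = (n + 4) / 5 := by
  set m := (n + 4) / 5 with hmdef
  have hm1 : n ≤ 5 * m := by omega
  have hm2 : 5 * m ≤ n + 4 := by omega
  -- the explicit dominating set
  set M : Finset (Fin n) :=
    (Finset.range m).image (fun k => (⟨min (5 * k + 2) (n - 1), by omega⟩ : Fin n)) with hMdef
  have hMcard : M.card = m := by
    rw [hMdef, Finset.card_image_of_injOn, Finset.card_range]
    intro k hk j hj hkj
    simp only [Finset.coe_range, Set.mem_Iio] at hk hj
    have := Fin.mk.injEq (min (5 * k + 2) (n - 1)) _ (min (5 * j + 2) (n - 1)) _ ▸ hkj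
    have h2 : min (5 * k + 2) (n - 1) = min (5 * j + 2) (n - 1) := Fin.val_eq_of_eq hkj
    omega
  have hMdom : IsDominatingSet (pathSq n) M := by
    intro v
    set k := (v : ℕ) / 5 with hk
    have hvlt : (v : ℕ) < n := v.isLt
    have hklt : k < m := by omega
    set u : Fin n := ⟨min (5 * k + 2) (n - 1), by omega⟩ with hu
    have huM : u ∈ M := by
      rw [hMdef]
      exact Finset.mem_image.mpr ⟨k, Finset.mem_range.mpr hklt, rfl⟩
    by_cases h : u = v
    · left; rwa [h] at huM
    · right
      refine ⟨u, huM, h, ?_, ?_⟩ <;>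
      · simp only [hu]
        omega
  have hmem : m ∈ {r | ∃ M : Finset (Fin n), IsDominatingSet (pathSq n) M ∧ M.card = r} :=
    ⟨M, hMdom, hMcard⟩
  have hlb : ∀ r ∈ {r | ∃ M : Finset (Fin n), IsDominatingSet (pathSq n) M ∧ M.card = r},
      m ≤ r := by
    rintro r ⟨N, hNdom, hNcard⟩
    -- each vertex of N dominates at most 5 vertices
    have key : n ≤ 5 * r := by
      set ball : Fin n → Finset (Fin n) :=
        fun u => Finset.univ.filter (fun v => (u : ℕ) ≤ (v : ℕ) + 2 ∧ (v : ℕ) ≤ (u : ℕ) + 2)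
        with hball
      have hcover : (Finset.univ : Finset (Fin n)) ⊆ N.biUnion ball := by
        intro v _
        rcases hNdom v with hv | ⟨w, hwN, hadj⟩
        · exact Finset.mem_biUnion.mpr ⟨v, hv, by simp [hball]⟩
        · exact Finset.mem_biUnion.mpr ⟨w, hwN, by simp [hball, hadj.2.1, hadj.2.2]⟩
      have hballcard : ∀ u : Fin n, (ball u).card ≤ 5 := by
        intro u
        have hsub : ∀ v ∈ ball u, (v : ℕ) ∈ Finset.Icc ((u : ℕ) - 2) ((u : ℕ) + 2) := by
          intro v hv
          simp only [hball, Finset.mem_filter] at hv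
          simp only [Finset.mem_Icc]
          omega
        have hinj : Set.InjOn (fun v : Fin n => (v : ℕ)) (ball u) := by
          intro a _ b _ hab
          exact Fin.val_injective hab
        have := Finset.card_le_card_of_injOn _ hsub hinj
        have hc : (Finset.Icc ((u : ℕ) - 2) ((u : ℕ) + 2)).card = (u:ℕ) + 2 + 1 - ((u:ℕ) - 2) :=
          Nat.card_Icc _ _
        omega
      calc n = (Finset.univ : Finset (Fin n)).card := by simp
        _ ≤ (N.biUnion ball).card := Finset.card_le_card hcover
        _ ≤ ∑ u ∈ N, (ball u).card := Finset.card_biUnion_le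
        _ ≤ ∑ _u ∈ N, 5 := Finset.sum_le_sum (fun u _ => hballcard u)
        _ = 5 * r := by rw [Finset.sum_const, hNcard]; ring
    omega
  unfold dominationNumber
  exact le_antisymm (Nat.sInf_le hmem) (le_csInf ⟨m, hmem⟩ hlb)

end
end

section
/- For n ≥ 7, the simplicial complex NI[P_n^2] on vertices x_1,...,x_n with facets F_1 = {x_1,x_2,x_3}, F_{n-4} = {x_{n-2},x_{n-1},x_n}, and F_i = {x_i, x_{i+1}, x_{i+2}, x_{i+3}, x_{i+4}} for 2 ≤ i ≤ n-5 is (non-pure) shellable; in particular the ordering F_2, F_3, ..., F_{n-5}, F_1, F_{n-4} is a shelling order. -/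
noncomputable section

/-- The face `{x_{a+1}, …, x_{b+1}}` (0-indexed: `{j : Fin n | a ≤ j ≤ b}`). -/
def faceIcc (n a b : ℕ) : Finset (Fin n) :=
  Finset.univ.filter (fun j : Fin n => a ≤ (j : ℕ) ∧ (j : ℕ) ≤ b)

/-- The facets of the simplicial complex `NI[P_n²]` (for `n ≥ 7`), 1-indexed in the paper:
`F_1 = {x_1,x_2,x_3}`, `F_{n-4} = {x_{n-2},x_{n-1},x_n}`, and
`F_i = {x_i,…,x_{i+4}}` for `2 ≤ i ≤ n-5`. -/
def niFacets (n : ℕ) : Finset (Finset (Fin n)) :=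
  insert (faceIcc n 0 2) (insert (faceIcc n (n - 3) (n - 1))
    ((Finset.Icc 1 (n - 6)).image fun a => faceIcc n a (a + 4)))

/-- The simplicial complex `NI[P_n²]`: all subsets of the facets. -/
def niComplex (n : ℕ) : Finset (Finset (Fin n)) :=
  Finset.univ.filter (fun A : Finset (Fin n) => ∃ F ∈ niFacets n, A ⊆ F)

/-- `G` is a shelling order of a (non-pure) simplicial complex: for all `i < j` there are
a vertex `v ∈ G j \ G i` and an index `l < j` with `G j \ G l = {v}`. -/
def IsShellingOrder {n r : ℕ} (G : Fin r → Finset (Fin n)) : Prop :=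
  ∀ i j : Fin r, i < j →
    ∃ v ∈ G j \ G i, ∃ l : Fin r, l < j ∧ G j \ G l = {v}

/-- The ordering `F_2, F_3, …, F_{n-5}, F_1, F_{n-4}` of the facets of `NI[P_n²]`. -/
def shellOrd (n : ℕ) (j : Fin (n - 4)) : Finset (Fin n) :=
  if (j : ℕ) < n - 6 then faceIcc n ((j : ℕ) + 1) ((j : ℕ) + 5)
  else if (j : ℕ) = n - 6 then faceIcc n 0 2
  else faceIcc n (n - 3) (n - 1)

/-!
In the order `F_2, …, F_{n-5}, F_1, F_{n-4}`, each facet after the first has exactly one vertex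
outside some earlier facet, and that vertex lies in no earlier facet: for a window `F_i` with
`i ≥ 3` it is its top vertex `x_{i+4}`, its only vertex outside `F_{i-1}`; for `F_1` it is `x_1`,
outside `F_2`; for `F_{n-4}` it is `x_n`, outside `F_{n-5}`.
-/

section Faces

variable {n : ℕ}

@[simp]
lemma mem_faceIcc {a b : ℕ} {x : Fin n} : x ∈ faceIcc n a b ↔ a ≤ (x : ℕ) ∧ (x : ℕ) ≤ b := by
  simp [faceIcc]

lemma faceIcc_sdiff_eq_singleton_right {a b c d : ℕ} (hab : a ≤ b) (hb : b < n) (hca : c ≤ a)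
    (hdb : d + 1 = b) : faceIcc n a b \ faceIcc n c d = {⟨b, hb⟩} := by
  ext x
  simp only [Finset.mem_sdiff, mem_faceIcc, Finset.mem_singleton, Fin.ext_iff]
  omega

lemma faceIcc_sdiff_eq_singleton_left {a b c d : ℕ} (hab : a ≤ b) (hb : b < n) (hac : a + 1 = c)
    (hbd : b ≤ d) : faceIcc n a b \ faceIcc n c d = {⟨a, by omega⟩} := by
  ext x
  simp only [Finset.mem_sdiff, mem_faceIcc, Finset.mem_singleton, Fin.ext_iff]
  omega

end Faces

lemma IsShellingOrder.injective {n r : ℕ} {G : Fin r → Finset (Fin n)} (hG : IsShellingOrder G) :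
    Function.Injective G := by
  refine fun i j hij ↦ le_antisymm ?_ ?_ <;> by_contra! hlt
  · obtain ⟨v, hv, -⟩ := hG j i hlt
    simp [hij] at hv
  · obtain ⟨v, hv, -⟩ := hG i j hlt
    simp [hij] at hv

section ShellOrd

variable {n : ℕ} {j : Fin (n - 4)}

lemma shellOrd_of_lt (h : (j : ℕ) < n - 6) : shellOrd n j = faceIcc n (j + 1) (j + 5) := by
  simp [shellOrd, h]

lemma shellOrd_of_eq (h : (j : ℕ) = n - 6) : shellOrd n j = faceIcc n 0 2 := by
  simp [shellOrd, h]

lemma shellOrd_of_gt (h : n - 6 < (j : ℕ)) : shellOrd n j = faceIcc n (n - 3) (n - 1) := by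
  simp [shellOrd, h.not_gt, h.ne']

lemma shellOrd_mem_niFacets (j : Fin (n - 4)) : shellOrd n j ∈ niFacets n := by
  rcases lt_trichotomy (j : ℕ) (n - 6) with h | h | h
  · rw [shellOrd_of_lt h]
    refine Finset.mem_insert_of_mem (Finset.mem_insert_of_mem (Finset.mem_image.2 ⟨j + 1, ?_, rfl⟩))
    simp only [Finset.mem_Icc]
    omega
  · simp [shellOrd_of_eq h, niFacets]
  · simp [shellOrd_of_gt h, niFacets]

lemma exists_shellOrd_eq_of_mem_niFacets (hn : 6 ≤ n) {F : Finset (Fin n)} (hF : F ∈ niFacets n) :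
    ∃ j, shellOrd n j = F := by
  simp only [niFacets, Finset.mem_insert, Finset.mem_image, Finset.mem_Icc] at hF
  rcases hF with rfl | rfl | ⟨a, ha, rfl⟩
  · exact ⟨⟨n - 6, by omega⟩, shellOrd_of_eq rfl⟩
  · exact ⟨⟨n - 5, by omega⟩, shellOrd_of_gt (show n - 6 < n - 5 by omega)⟩
  · refine ⟨⟨a - 1, by omega⟩, ?_⟩
    rw [shellOrd_of_lt (show a - 1 < n - 6 by omega)]
    congr 1 <;> dsimp only <;> omega

lemma image_shellOrd_univ (hn : 6 ≤ n) : Finset.univ.image (shellOrd n) = niFacets n := by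
  ext F
  simp only [Finset.mem_image, Finset.mem_univ, true_and]
  exact ⟨by rintro ⟨j, rfl⟩; exact shellOrd_mem_niFacets j,
    exists_shellOrd_eq_of_mem_niFacets hn⟩

lemma shellOrd_isShellingOrder (hn : 7 ≤ n) : IsShellingOrder (shellOrd n) := by
  intro i j hij
  rw [Fin.lt_def] at hij
  have hj := j.isLt
  rcases lt_trichotomy (j : ℕ) (n - 6) with h | h | h
  · have hi := shellOrd_of_lt (hij.trans h)
    refine ⟨⟨j + 5, by omega⟩, ?_, ⟨j - 1, by omega⟩, Fin.mk_lt_of_lt_val (by omega), ?_⟩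
    · simp only [Finset.mem_sdiff, shellOrd_of_lt h, hi, mem_faceIcc]
      omega
    · rw [shellOrd_of_lt h, shellOrd_of_lt (show j - 1 < n - 6 by omega)]
      exact faceIcc_sdiff_eq_singleton_right (by omega) _ (by simp only; omega) (by simp only; omega)
  · have hi := shellOrd_of_lt (h ▸ hij)
    refine ⟨⟨0, by omega⟩, ?_, ⟨0, by omega⟩, Fin.mk_lt_of_lt_val (by omega), ?_⟩
    · simp only [Finset.mem_sdiff, shellOrd_of_eq h, hi, mem_faceIcc]
      omega
    · rw [shellOrd_of_eq h, shellOrd_of_lt (show 0 < n - 6 by omega)]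
      exact faceIcc_sdiff_eq_singleton_left (by omega) (by omega) rfl (by simp only; omega)
  · refine ⟨⟨n - 1, by omega⟩, ?_, ⟨n - 7, by omega⟩, Fin.mk_lt_of_lt_val (by omega), ?_⟩
    · rcases lt_or_eq_of_le (show (i : ℕ) ≤ n - 6 by omega) with hi | hi
      · simp only [Finset.mem_sdiff, shellOrd_of_gt h, shellOrd_of_lt hi, mem_faceIcc]
        omega
      · simp only [Finset.mem_sdiff, shellOrd_of_gt h, shellOrd_of_eq hi, mem_faceIcc]
        omega
    · rw [shellOrd_of_gt h, shellOrd_of_lt (show n - 7 < n - 6 by omega)]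
      exact faceIcc_sdiff_eq_singleton_right (by omega) _ (by simp only; omega) (by simp only; omega)

end ShellOrd

/-- For `n ≥ 7`, the simplicial complex `NI[P_n²]` is (non-pure) shellable; in fact the
ordering `F_2, F_3, …, F_{n-5}, F_1, F_{n-4}` of its facets is a shelling order. -/
theorem niComplex_shellable (n : ℕ) (hn : 7 ≤ n) :
    Function.Injective (shellOrd n) ∧
    Finset.image (shellOrd n) Finset.univ = niFacets n ∧
    IsShellingOrder (shellOrd n) := by
  have hshell := shellOrd_isShellingOrder hn
  exact ⟨hshell.injective, image_shellOrd_univ (by omega), hshell⟩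

end
end

section
/- For n ≥ 7, the simplicial complex NI[P_n^2] with facets F_1 = {x_1,x_2,x_3}, F_{n-4} = {x_{n-2},x_{n-1},x_n}, F_i = {x_i,...,x_{i+4}} (2 ≤ i ≤ n-5) has the free vertex property: x_1 is a free vertex (belonging only to F_1), and both the complex obtained by removing the facet F_1 and the complex of faces avoiding x_1 have x_n as a free vertex. -/
noncomputable section

/-- The facets (maximal faces) of a finite simplicial complex given by its set of faces. -/
def facetsOf {n : ℕ} (Δ : Finset (Finset (Fin n))) : Finset (Finset (Fin n)) :=
  Δ.filter (fun F => ∀ G ∈ Δ, F ⊆ G → F = G)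

/-- `x` is a free vertex of `Δ`: it belongs to exactly one facet. -/
def IsFreeVertex {n : ℕ} (Δ : Finset (Finset (Fin n))) (x : Fin n) : Prop :=
  ((facetsOf Δ).filter (fun F => x ∈ F)).card = 1

/-- `Δ ∖ ⟨F⟩`: the complex generated by the facets other than `F`. -/
def delFacet {n : ℕ} (Δ : Finset (Finset (Fin n))) (F : Finset (Fin n)) :
    Finset (Finset (Fin n)) :=
  Δ.filter (fun A => ∃ G ∈ facetsOf Δ, G ≠ F ∧ A ⊆ G)

/-- `Δ ∖ x`: the faces of `Δ` avoiding the vertex `x`. -/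
def delVertex {n : ℕ} (Δ : Finset (Finset (Fin n))) (x : Fin n) :
    Finset (Finset (Fin n)) :=
  Δ.filter (fun A => x ∉ A)

/-- The free vertex property: `Δ` is a simplex, or `Δ` has a free vertex `x`, belonging
to the unique facet `F`, such that both `Δ ∖ ⟨F⟩` and `Δ ∖ x` have the free vertex
property. -/
inductive HasFreeVertexProperty (n : ℕ) : Finset (Finset (Fin n)) → Prop
  | simplex (F : Finset (Fin n)) : HasFreeVertexProperty n F.powerset
  | step (Δ : Finset (Finset (Fin n))) (x : Fin n) (F : Finset (Fin n)) :
      IsFreeVertex Δ x → F ∈ facetsOf Δ → x ∈ F →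
      HasFreeVertexProperty n (delFacet Δ F) →
      HasFreeVertexProperty n (delVertex Δ x) →
      HasFreeVertexProperty n Δ

namespace NIaux

/-- strict interval order -/
def Rel (p q : ℕ × ℕ) : Prop := p.1 < q.1 ∧ p.2 < q.2

def Valid (n : ℕ) (p : ℕ × ℕ) : Prop := p.1 ≤ p.2 ∧ p.2 < n

/-- complex generated by a list of intervals -/
def genL (n : ℕ) (L : List (ℕ × ℕ)) : Finset (Finset (Fin n)) :=
  Finset.univ.filter (fun A => ∃ p ∈ L, A ⊆ faceIcc n p.1 p.2)

lemma mem_genL {n : ℕ} {L : List (ℕ × ℕ)} {A : Finset (Fin n)} :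
    A ∈ genL n L ↔ ∃ p ∈ L, A ⊆ faceIcc n p.1 p.2 := by simp [genL]

lemma mem_faceIcc {n a b : ℕ} {j : Fin n} :
    j ∈ faceIcc n a b ↔ a ≤ (j : ℕ) ∧ (j : ℕ) ≤ b := by simp [faceIcc]

lemma mk_mem_faceIcc {n a b c : ℕ} (hc : c < n) (h1 : a ≤ c) (h2 : c ≤ b) :
    (⟨c, hc⟩ : Fin n) ∈ faceIcc n a b := mem_faceIcc.mpr ⟨h1, h2⟩

lemma faceIcc_subset {n a b c d : ℕ} (h1 : c ≤ a) (h2 : b ≤ d) :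
    faceIcc n a b ⊆ faceIcc n c d := fun j hj => by
  rw [mem_faceIcc] at *; omega

lemma subset_endpoints {n a b c d : ℕ} (hab : a ≤ b) (hb : b < n)
    (h : faceIcc n a b ⊆ faceIcc n c d) : c ≤ a ∧ b ≤ d := by
  have h1 := mem_faceIcc.mp (h (mk_mem_faceIcc (by omega : a < n) le_rfl hab))
  have h2 := mem_faceIcc.mp (h (mk_mem_faceIcc hb hab le_rfl))
  simp only [Fin.val_mk] at h1 h2
  omega

lemma mem_facets_genL {n : ℕ} {L : List (ℕ × ℕ)} (hV : ∀ p ∈ L, Valid n p)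
    (hP : L.Pairwise Rel) {F : Finset (Fin n)} :
    F ∈ facetsOf (genL n L) ↔ ∃ p ∈ L, F = faceIcc n p.1 p.2 := by
  constructor
  · rintro hF
    rw [facetsOf, Finset.mem_filter] at hF
    obtain ⟨hF1, hF2⟩ := hF
    obtain ⟨p, hp, hsub⟩ := mem_genL.mp hF1
    exact ⟨p, hp, hF2 _ (mem_genL.mpr ⟨p, hp, Finset.Subset.refl _⟩) hsub⟩
  · rintro ⟨p, hp, rfl⟩
    rw [facetsOf, Finset.mem_filter]
    refine ⟨mem_genL.mpr ⟨p, hp, Finset.Subset.refl _⟩, ?_⟩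
    intro G hG hsub
    obtain ⟨q, hq, hGq⟩ := mem_genL.mp hG
    have hvp := hV p hp
    have hpq := subset_endpoints hvp.1 hvp.2 (hsub.trans hGq)
    have hpq' : p = q := by
      rcases eq_or_ne p q with h | h
      · exact h
      · have hsym : Symmetric (fun a b : ℕ × ℕ => Rel a b ∨ Rel b a) := by
          intro a b h; tauto
        haveI : Std.Symm (fun a b : ℕ × ℕ => Rel a b ∨ Rel b a) := ⟨fun a b h => hsym h⟩
        have := (hP.imp (fun {a b} h => Or.inl h :
            ∀ {a b}, Rel a b → (Rel a b ∨ Rel b a))).forall hp hq h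
        rcases this with ⟨h1, _⟩ | ⟨_, h2⟩ <;> [exact absurd hpq.1 (by omega);
          exact absurd hpq.2 (by omega)]
    subst hpq'
    exact Finset.Subset.antisymm hsub (hGq.trans (faceIcc_subset hpq.1 hpq.2))

lemma isFree_genL {n : ℕ} {L : List (ℕ × ℕ)} (hV : ∀ p ∈ L, Valid n p)
    (hP : L.Pairwise Rel) {q : ℕ × ℕ} (hq : q ∈ L) {x : Fin n}
    (hx : x ∈ faceIcc n q.1 q.2)
    (huniq : ∀ p ∈ L, x ∈ faceIcc n p.1 p.2 → p = q) :
    IsFreeVertex (genL n L) x := by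
  have key : (facetsOf (genL n L)).filter (fun F => x ∈ F) = {faceIcc n q.1 q.2} := by
    ext G
    simp only [Finset.mem_filter, Finset.mem_singleton]
    constructor
    · rintro ⟨hG, hxG⟩
      obtain ⟨p, hp, rfl⟩ := (mem_facets_genL hV hP).mp hG
      rw [huniq p hp hxG]
    · rintro rfl
      exact ⟨(mem_facets_genL hV hP).mpr ⟨q, hq, rfl⟩, hx⟩
  rw [IsFreeVertex, key, Finset.card_singleton]

lemma delFacet_genL {n : ℕ} {hd : ℕ × ℕ} {tl : List (ℕ × ℕ)}
    (hV : ∀ p ∈ hd :: tl, Valid n p) (hP : (hd :: tl).Pairwise Rel) :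
    delFacet (genL n (hd :: tl)) (faceIcc n hd.1 hd.2) = genL n tl := by
  ext A
  rw [delFacet, Finset.mem_filter, mem_genL, mem_genL]
  constructor
  · rintro ⟨_, G, hG, hGne, hAG⟩
    obtain ⟨p, hp, rfl⟩ := (mem_facets_genL hV hP).mp hG
    rcases List.mem_cons.mp hp with rfl | hp
    · exact absurd rfl hGne
    · exact ⟨p, hp, hAG⟩
  · rintro ⟨p, hp, hAp⟩
    refine ⟨⟨p, List.mem_cons_of_mem _ hp, hAp⟩, faceIcc n p.1 p.2,
      (mem_facets_genL hV hP).mpr ⟨p, List.mem_cons_of_mem _ hp, rfl⟩, ?_, hAp⟩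
    intro heq
    have hrel : Rel hd p := (List.pairwise_cons.mp hP).1 p hp
    have hvh := hV hd (List.mem_cons_self)
    have hn1 : hd.1 < n := by have := hvh.1; have := hvh.2; omega
    have : (⟨hd.1, hn1⟩ : Fin n) ∈ faceIcc n p.1 p.2 := by
      rw [heq]; exact mk_mem_faceIcc _ le_rfl hvh.1
    have := mem_faceIcc.mp this
    simp only [Fin.val_mk] at this
    exact absurd this.1 (by have := hrel.1; omega)

lemma genL_cons_absorb {n : ℕ} {q p : ℕ × ℕ} {tl : List (ℕ × ℕ)} (hp : p ∈ tl)
    (h1 : p.1 ≤ q.1) (h2 : q.2 ≤ p.2) : genL n (q :: tl) = genL n tl := by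
  ext A; rw [mem_genL, mem_genL]
  constructor
  · rintro ⟨r, hr, hAr⟩
    rcases List.mem_cons.mp hr with rfl | hr
    · exact ⟨p, hp, hAr.trans (faceIcc_subset h1 h2)⟩
    · exact ⟨r, hr, hAr⟩
  · rintro ⟨r, hr, hAr⟩; exact ⟨r, List.mem_cons_of_mem _ hr, hAr⟩

lemma delVertex_genL {n : ℕ} {hd : ℕ × ℕ} {tl : List (ℕ × ℕ)}
    (hP : (hd :: tl).Pairwise Rel) (hlt : hd.1 < hd.2) {x : Fin n}
    (hx : (x : ℕ) = hd.1) :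
    delVertex (genL n (hd :: tl)) x = genL n ((hd.1 + 1, hd.2) :: tl) := by
  ext A
  rw [delVertex, Finset.mem_filter, mem_genL, mem_genL]
  constructor
  · rintro ⟨⟨p, hp, hAp⟩, hxA⟩
    rcases List.mem_cons.mp hp with rfl | hp
    · refine ⟨(p.1 + 1, p.2), List.mem_cons_self, ?_⟩
      intro j hj
      have hjm := mem_faceIcc.mp (hAp hj)
      refine mem_faceIcc.mpr ⟨?_, hjm.2⟩
      rcases Nat.lt_or_ge p.1 (j : ℕ) with h | h
      · exact h
      · exfalso; apply hxA
        have : x = j := Fin.ext (by omega)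
        rwa [this]
    · exact ⟨p, List.mem_cons_of_mem _ hp, hAp⟩
  · rintro ⟨p, hp, hAp⟩
    rcases List.mem_cons.mp hp with rfl | hp
    · refine ⟨⟨hd, List.mem_cons_self, hAp.trans (faceIcc_subset (by omega) le_rfl)⟩, ?_⟩
      intro hxmem
      have := mem_faceIcc.mp (hAp hxmem)
      omega
    · refine ⟨⟨p, List.mem_cons_of_mem _ hp, hAp⟩, ?_⟩
      intro hxmem
      have hrel : Rel hd p := (List.pairwise_cons.mp hP).1 p hp
      have := mem_faceIcc.mp (hAp hxmem)
      have := hrel.1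
      omega

lemma delVertex_genL_pt {n : ℕ} {hd q : ℕ × ℕ} {tl : List (ℕ × ℕ)}
    (hP : (hd :: q :: tl).Pairwise Rel) (heq : hd.1 = hd.2) {x : Fin n}
    (hx : (x : ℕ) = hd.1) :
    delVertex (genL n (hd :: q :: tl)) x = genL n (q :: tl) := by
  ext A
  rw [delVertex, Finset.mem_filter, mem_genL, mem_genL]
  constructor
  · rintro ⟨⟨p, hp, hAp⟩, hxA⟩
    rcases List.mem_cons.mp hp with rfl | hp
    · refine ⟨q, List.mem_cons_self, ?_⟩
      intro j hj
      exfalso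
      have := mem_faceIcc.mp (hAp hj)
      have : x = j := Fin.ext (by omega)
      exact hxA (this ▸ hj)
    · exact ⟨p, hp, hAp⟩
  · rintro ⟨p, hp, hAp⟩
    refine ⟨⟨p, List.mem_cons_of_mem _ hp, hAp⟩, ?_⟩
    intro hxmem
    have hrel : Rel hd p := (List.pairwise_cons.mp hP).1 p hp
    have := mem_faceIcc.mp (hAp hxmem)
    have := hrel.1
    omega

lemma genL_singleton {n : ℕ} (p : ℕ × ℕ) :
    genL n [p] = (faceIcc n p.1 p.2).powerset := by
  ext A; simp [mem_genL, Finset.mem_powerset]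

def meas (L : List (ℕ × ℕ)) : ℕ := (L.map fun p => p.2 + 1 - p.1).sum

lemma meas_cons (p : ℕ × ℕ) (tl : List (ℕ × ℕ)) :
    meas (p :: tl) = (p.2 + 1 - p.1) + meas tl := by simp [meas]

lemma fvp_genL {n : ℕ} (N : ℕ) : ∀ L : List (ℕ × ℕ), meas L ≤ N → L ≠ [] →
    (∀ p ∈ L, Valid n p) → L.Pairwise Rel → HasFreeVertexProperty n (genL n L) := by
  induction N with
  | zero =>
    rintro (_ | ⟨p, tl⟩) hm hne hV hP
    · exact absurd rfl hne
    · exfalso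
      have := (hV p (List.mem_cons_self)).1
      rw [meas_cons] at hm; omega
  | succ N ih =>
    rintro (_ | ⟨p, (_ | ⟨q, tl⟩)⟩) hm hne hV hP
    · exact absurd rfl hne
    · rw [genL_singleton]; exact HasFreeVertexProperty.simplex _
    · have hvp := hV p (List.mem_cons_self)
      have hvq := hV q (List.mem_cons_of_mem _ (List.mem_cons_self))
      have hrelpq : Rel p q := (List.pairwise_cons.mp hP).1 q
        (List.mem_cons_self)
      have hVt : ∀ r ∈ q :: tl, Valid n r := fun r hr => hV r (List.mem_cons_of_mem _ hr)
      have hPt : (q :: tl).Pairwise Rel := hP.of_cons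
      have hmt : meas (q :: tl) ≤ N := by rw [meas_cons] at hm; have := hvp.1; omega
      have hx0 : p.1 < n := by have := hvp.1; have := hvp.2; omega
      refine HasFreeVertexProperty.step _ ⟨p.1, hx0⟩ (faceIcc n p.1 p.2) ?_ ?_ ?_ ?_ ?_
      · refine isFree_genL hV hP (List.mem_cons_self)
          (mk_mem_faceIcc _ le_rfl hvp.1) ?_
        intro r hr hxr
        rcases List.mem_cons.mp hr with rfl | hr
        · rfl
        · exfalso
          have hrel : Rel p r := (List.pairwise_cons.mp hP).1 r hr
          have := mem_faceIcc.mp hxr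
          simp only [Fin.val_mk] at this
          exact absurd this.1 (by have := hrel.1; omega)
      · exact (mem_facets_genL hV hP).mpr ⟨p, List.mem_cons_self, rfl⟩
      · exact mk_mem_faceIcc _ le_rfl hvp.1
      · rw [delFacet_genL hV hP]
        exact ih _ hmt (by simp) hVt hPt
      · rcases Nat.lt_or_ge p.1 p.2 with hlt | hge
        · rw [delVertex_genL hP hlt rfl]
          rcases Nat.lt_or_ge (p.1 + 1) q.1 with hq1 | hq1
          · -- new list is still a chain
            refine ih _ ?_ (by simp) ?_ ?_
            · rw [meas_cons] at hm ⊢; simp only at *; omega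
            · rintro r hr
              rcases List.mem_cons.mp hr with rfl | hr
              · exact ⟨by omega, hvp.2⟩
              · exact hVt r hr
            · rw [List.pairwise_cons]
              refine ⟨?_, hPt⟩
              intro r hr
              rcases List.mem_cons.mp hr with rfl | hr
              · exact ⟨hq1, hrelpq.2⟩
              · have hrel : Rel q r := (List.pairwise_cons.mp hPt).1 r hr
                exact ⟨by have := hrel.1; omega, by have := hrel.2; have := hrelpq.2; omega⟩
          · -- absorbed by q
            rw [genL_cons_absorb (List.mem_cons_self) (by simpa using hq1)
              (by simpa using le_of_lt hrelpq.2)]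
            exact ih _ hmt (by simp) hVt hPt
        · have heq : p.1 = p.2 := le_antisymm hvp.1 hge
          rw [delVertex_genL_pt hP heq rfl]
          exact ih _ hmt (by simp) hVt hPt


/-- The tail of the interval list. -/
def niTail (n : ℕ) : List (ℕ × ℕ) :=
  ((List.range (n - 6)).map fun i => (i + 1, i + 5)) ++ [(n - 3, n - 1)]

def niList (n : ℕ) : List (ℕ × ℕ) := (0, 2) :: niTail n

lemma mem_niTail {n : ℕ} {p : ℕ × ℕ} :
    p ∈ niTail n ↔ (∃ i < n - 6, p = (i + 1, i + 5)) ∨ p = (n - 3, n - 1) := by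
  simp [niTail, eq_comm]

lemma mem_niList {n : ℕ} {p : ℕ × ℕ} :
    p ∈ niList n ↔ p = (0, 2) ∨ (∃ i < n - 6, p = (i + 1, i + 5)) ∨ p = (n - 3, n - 1) := by
  simp [niList, niTail, eq_comm]

lemma niList_valid {n : ℕ} (hn : 7 ≤ n) : ∀ p ∈ niList n, Valid n p := by
  intro p hp
  rcases mem_niList.mp hp with rfl | ⟨i, hi, rfl⟩ | rfl <;>
    exact ⟨by dsimp only; omega, by dsimp only; omega⟩

lemma niList_pairwise {n : ℕ} (hn : 7 ≤ n) : (niList n).Pairwise Rel := by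
  rw [niList, List.pairwise_cons]
  constructor
  · intro p hp
    rcases mem_niTail.mp hp with ⟨i, hi, rfl⟩ | rfl <;>
      exact ⟨by dsimp only; omega, by dsimp only; omega⟩
  · rw [niTail, List.pairwise_append]
    refine ⟨?_, List.pairwise_singleton _ _, ?_⟩
    · rw [List.pairwise_map]
      exact List.pairwise_lt_range.imp (fun {a b} h => ⟨by dsimp only; omega, by dsimp only; omega⟩)
    · rintro p hp q hq
      simp only [List.mem_map, List.mem_range] at hp
      simp only [List.mem_singleton] at hq
      obtain ⟨i, hi, rfl⟩ := hp
      subst hq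
      exact ⟨by dsimp only; omega, by dsimp only; omega⟩

lemma niComplex_eq (n : ℕ) : niComplex n = genL n (niList n) := by
  ext A
  rw [niComplex, genL, Finset.mem_filter, Finset.mem_filter]
  simp only [Finset.mem_univ, true_and, niFacets,
    Finset.mem_insert, Finset.mem_image, Finset.mem_Icc]
  constructor
  · rintro ⟨F, (rfl | rfl | ⟨a, ⟨ha1, ha2⟩, rfl⟩), hAF⟩
    · exact ⟨(0, 2), mem_niList.mpr (Or.inl rfl), hAF⟩
    · exact ⟨(n - 3, n - 1), mem_niList.mpr (Or.inr (Or.inr rfl)), hAF⟩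
    · refine ⟨(a, a + 4), mem_niList.mpr (Or.inr (Or.inl ⟨a - 1, by omega, ?_⟩)), hAF⟩
      simp only [Prod.mk.injEq]; omega
  · rintro ⟨p, hp, hAp⟩
    rcases mem_niList.mp hp with rfl | ⟨i, hi, rfl⟩ | rfl
    · exact ⟨faceIcc n 0 2, Or.inl rfl, hAp⟩
    · refine ⟨faceIcc n (i + 1) (i + 5), Or.inr (Or.inr ⟨i + 1, ⟨by omega, by omega⟩, ?_⟩), hAp⟩
      norm_num
    · exact ⟨faceIcc n (n - 3) (n - 1), Or.inr (Or.inl rfl), hAp⟩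

end NIaux

/-- For `n ≥ 7`, the complex `NI[P_n²]` has the free vertex property: `x_1` is a free
vertex, belonging only to the facet `F_1 = {x_1,x_2,x_3}`, and both the complex with the
facet `F_1` removed and the complex of faces avoiding `x_1` have `x_n` as a free vertex. -/
theorem niComplex_freeVertexProperty (n : ℕ) (hn : 7 ≤ n) :
    IsFreeVertex (niComplex n) ⟨0, by omega⟩ ∧
    faceIcc n 0 2 ∈ facetsOf (niComplex n) ∧
    (⟨0, by omega⟩ : Fin n) ∈ faceIcc n 0 2 ∧
    (∀ G ∈ facetsOf (niComplex n), (⟨0, by omega⟩ : Fin n) ∈ G → G = faceIcc n 0 2) ∧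
    IsFreeVertex (delFacet (niComplex n) (faceIcc n 0 2)) ⟨n - 1, by omega⟩ ∧
    IsFreeVertex (delVertex (niComplex n) ⟨0, by omega⟩) ⟨n - 1, by omega⟩ ∧
    HasFreeVertexProperty n (niComplex n) := by
  have hV := NIaux.niList_valid (n := n) hn
  have hP := NIaux.niList_pairwise (n := n) hn
  have hVt : ∀ p ∈ NIaux.niTail n, NIaux.Valid n p :=
    fun p hp => hV p (List.mem_cons_of_mem _ hp)
  have hPt : (NIaux.niTail n).Pairwise NIaux.Rel := hP.of_cons
  have hEq := NIaux.niComplex_eq n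
  have hqt : ((n - 3, n - 1) : ℕ × ℕ) ∈ NIaux.niTail n :=
    NIaux.mem_niTail.mpr (Or.inr rfl)
  have huniq0 : ∀ p ∈ NIaux.niList n,
      (⟨0, by omega⟩ : Fin n) ∈ faceIcc n p.1 p.2 → p = (0, 2) := by
    intro p hp hxp
    rcases NIaux.mem_niList.mp hp with rfl | ⟨i, hi, rfl⟩ | rfl
    · rfl
    · exfalso
      have := NIaux.mem_faceIcc.mp hxp
      simp only [Fin.val_mk] at this
      omega
    · exfalso
      have := NIaux.mem_faceIcc.mp hxp
      simp only [Fin.val_mk] at this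
      omega
  have hfree_tail : IsFreeVertex (NIaux.genL n (NIaux.niTail n)) ⟨n - 1, by omega⟩ := by
    refine NIaux.isFree_genL hVt hPt hqt
      (NIaux.mk_mem_faceIcc (by omega) (by dsimp only; omega) (by dsimp only; omega)) ?_
    intro p hp hxp
    rcases NIaux.mem_niTail.mp hp with ⟨i, hi, rfl⟩ | rfl
    · exfalso
      have := NIaux.mem_faceIcc.mp hxp
      simp only [Fin.val_mk] at this
      omega
    · rfl
  have hdelF : delFacet (NIaux.genL n (NIaux.niList n)) (faceIcc n 0 2)
      = NIaux.genL n (NIaux.niTail n) := NIaux.delFacet_genL hV hP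
  have hdelV : delVertex (NIaux.genL n (NIaux.niList n)) (⟨0, by omega⟩ : Fin n)
      = NIaux.genL n ((0 + 1, 2) :: NIaux.niTail n) :=
    NIaux.delVertex_genL hP (by dsimp only; omega) rfl
  have habs : NIaux.genL n ((0 + 1, 2) :: NIaux.niTail n) = NIaux.genL n (NIaux.niTail n) :=
    NIaux.genL_cons_absorb (p := (1, 5)) (NIaux.mem_niTail.mpr (Or.inl ⟨0, by omega, rfl⟩))
      (by dsimp only; omega) (by dsimp only; omega)
  refine ⟨?_, ?_, ?_, ?_, ?_, ?_, ?_⟩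
  · rw [hEq]
    exact NIaux.isFree_genL hV hP (List.mem_cons_self)
      (NIaux.mk_mem_faceIcc (by omega) (by dsimp only; omega) (by dsimp only; omega)) huniq0
  · rw [hEq]
    exact (NIaux.mem_facets_genL hV hP).mpr ⟨(0, 2), List.mem_cons_self, rfl⟩
  · exact NIaux.mk_mem_faceIcc (by omega) (by omega) (by omega)
  · intro G hG hxG
    rw [hEq] at hG
    obtain ⟨p, hp, rfl⟩ := (NIaux.mem_facets_genL hV hP).mp hG
    rw [huniq0 p hp hxG]
  · rw [hEq, hdelF]
    exact hfree_tail
  · rw [hEq, hdelV, habs]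
    exact hfree_tail
  · rw [hEq]
    exact NIaux.fvp_genL (NIaux.meas (NIaux.niList n)) _ le_rfl (by simp [NIaux.niList]) hV hP

end
end

section
/- For n ≥ 7, the complementary ideal I^c(P_n^2) = (x_1⋯x_{n-3}, x_4⋯x_n) + ( (x_1⋯x_n)/(x_i x_{i+1} x_{i+2} x_{i+3} x_{i+4}) : 2 ≤ i ≤ n-5 ) in k[x_1,...,x_n] has linear quotients. -/
open MvPolynomial

noncomputable section

/-- The product `∏_{a ≤ j ≤ b} X j` (0-indexed). -/
def prodIcc (k : Type*) [Field k] (n a b : ℕ) : MvPolynomial (Fin n) k :=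
  ∏ j ∈ Finset.univ.filter (fun j : Fin n => a ≤ (j : ℕ) ∧ (j : ℕ) ≤ b), X j

/-- The complementary product `(x_1⋯x_n)/(x_{a+1}⋯x_{b+1})`, i.e. `∏_{j ∉ [a,b]} X j`
(0-indexed). -/
def coProdIcc (k : Type*) [Field k] (n a b : ℕ) : MvPolynomial (Fin n) k :=
  ∏ j ∈ Finset.univ.filter (fun j : Fin n => ¬(a ≤ (j : ℕ) ∧ (j : ℕ) ≤ b)), X j

/-- The generators of the complementary ideal `I^c(P_n²)` (1-indexed in the paper):
`x_1⋯x_{n-3}`, `x_4⋯x_n`, and `(x_1⋯x_n)/(x_i x_{i+1} x_{i+2} x_{i+3} x_{i+4})` for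
`2 ≤ i ≤ n-5`. -/
def complGens (k : Type*) [Field k] (n : ℕ) : Set (MvPolynomial (Fin n) k) :=
  {prodIcc k n 0 (n - 4), prodIcc k n 3 (n - 1)} ∪
    {q | ∃ a : ℕ, 1 ≤ a ∧ a ≤ n - 6 ∧ q = coProdIcc k n a (a + 4)}

/-- A monomial ideal has linear quotients: its minimal monomial generators can be
ordered `m_1, …, m_r` so that each colon ideal `(m_1,…,m_i) : m_{i+1}` is generated by
variables. -/
def HasLinearQuotients {k : Type*} [Field k] {n : ℕ}
    (I : Ideal (MvPolynomial (Fin n) k)) : Prop :=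
  ∃ r : ℕ, ∃ m : Fin r → MvPolynomial (Fin n) k,
    Function.Injective m ∧
    Ideal.span (Set.range m) = I ∧
    (∀ i, m i ∉ Ideal.span (Set.range m \ {m i})) ∧
    ∀ i : Fin r, ∃ V : Set (Fin n),
      Submodule.colon (Ideal.span {q | ∃ j : Fin r, j < i ∧ q = m j})
        (Submodule.span (MvPolynomial (Fin n) k) {m i}) = Ideal.span (X '' V)

namespace LQAux

variable {k : Type*} [Field k] {n : ℕ}

/-- indicator finsupp of a finset -/
def indF (S : Finset (Fin n)) : Fin n →₀ ℕ := ∑ j ∈ S, Finsupp.single j 1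

lemma indF_apply (S : Finset (Fin n)) (x : Fin n) :
    indF S x = if x ∈ S then 1 else 0 := by
  classical
  rw [indF, Finset.sum_apply']
  simp [Finsupp.single_apply]

lemma indF_le_iff {S T : Finset (Fin n)} : indF S ≤ indF T ↔ S ⊆ T := by
  classical
  constructor
  · intro h x hx
    have := h x
    rw [indF_apply, indF_apply, if_pos hx] at this
    by_contra hxT
    rw [if_neg hxT] at this
    omega
  · intro h x
    rw [indF_apply, indF_apply]
    by_cases hx : x ∈ S
    · rw [if_pos hx, if_pos (h hx)]
    · simp [hx]

lemma indF_inj {S T : Finset (Fin n)} (h : indF S = indF T) : S = T :=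
  le_antisymm (indF_le_iff.1 h.le) (indF_le_iff.1 h.ge)

lemma prod_X_eq (S : Finset (Fin n)) :
    (∏ j ∈ S, (X j : MvPolynomial (Fin n) k)) = monomial (indF S) 1 := by
  classical
  induction S using Finset.induction_on with
  | empty => simp [indF]
  | @insert a s ha ih =>
      have hX : (X a : MvPolynomial (Fin n) k) = monomial (Finsupp.single a 1) 1 := by
        rw [← X_pow_eq_monomial, pow_one]
      rw [Finset.prod_insert ha, ih, hX, monomial_mul, one_mul]
      simp only [indF, Finset.sum_insert ha]

lemma mem_support_mul_monomial {r : MvPolynomial (Fin n) k} {d μ : Fin n →₀ ℕ} :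
    μ ∈ (r * monomial d 1).support ↔ ∃ ν ∈ r.support, ν + d = μ := by
  classical
  have h2 : (r * monomial d (1:k)).support = r.support.map (addRightEmbedding d) :=
    AddMonoidAlgebra.support_coeff_mul_single r 1 (by simp) d
  rw [h2]
  simp [Finset.mem_map, addRightEmbedding_apply]

lemma colon_bot (d : Fin n →₀ ℕ) :
    Submodule.colon (Ideal.span (∅ : Set (MvPolynomial (Fin n) k)))
      (Submodule.span (MvPolynomial (Fin n) k) {(monomial d (1:k))}) =
    Ideal.span (X '' (∅ : Set (Fin n))) := by
  ext r
  rw [Submodule.mem_colon_span_singleton, smul_eq_mul]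
  simp [Ideal.span_empty, mul_eq_zero, monomial_eq_zero]

lemma colon_eq (G : Set (Fin n →₀ ℕ)) (d : Fin n →₀ ℕ) (c : Fin n)
    (h1 : ∀ g ∈ G, g c ≠ 0) (h2 : d c = 0) (h3 : ∃ g ∈ G, g ≤ d + Finsupp.single c 1) :
    Submodule.colon (Ideal.span ((fun s => monomial s (1:k)) '' G))
      (Submodule.span (MvPolynomial (Fin n) k) {(monomial d (1:k))}) =
    Ideal.span (X '' ({c} : Set (Fin n))) := by
  ext r
  rw [Submodule.mem_colon_span_singleton, smul_eq_mul, mem_ideal_span_monomial_image,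
    mem_ideal_span_X_image]
  constructor
  · intro h ν hν
    obtain ⟨g, hg, hle⟩ := h (ν + d) (mem_support_mul_monomial.2 ⟨ν, hν, rfl⟩)
    refine ⟨c, rfl, ?_⟩
    have hc := hle c
    have := h1 g hg
    simp only [Finsupp.add_apply] at hc
    omega
  · intro h μ hμ
    obtain ⟨ν, hν, rfl⟩ := mem_support_mul_monomial.1 hμ
    obtain ⟨c', hc', hcne⟩ := h ν hν
    rcases hc' with rfl
    obtain ⟨g, hg, hle⟩ := h3
    refine ⟨g, hg, hle.trans ?_⟩
    intro x
    simp only [Finsupp.add_apply, Finsupp.single_apply]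
    by_cases hx : c' = x
    · subst hx; simp; omega
    · simp [hx]

def pI (n a b : ℕ) : Finset (Fin n) :=
  Finset.univ.filter (fun j : Fin n => a ≤ (j : ℕ) ∧ (j : ℕ) ≤ b)

def cI (n a b : ℕ) : Finset (Fin n) :=
  Finset.univ.filter (fun j : Fin n => ¬(a ≤ (j : ℕ) ∧ (j : ℕ) ≤ b))

lemma prodIcc_eq (k : Type*) [Field k] (n a b : ℕ) :
    prodIcc k n a b = monomial (indF (pI n a b)) 1 := prod_X_eq _

lemma coProdIcc_eq (k : Type*) [Field k] (n a b : ℕ) :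
    coProdIcc k n a b = monomial (indF (cI n a b)) 1 := prod_X_eq _

def SS (n i : ℕ) : Finset (Fin n) :=
  if i < n - 6 then cI n (i+1) (i+5) else if i = n - 6 then pI n 0 (n-4) else pI n 3 (n-1)

lemma mem_SS {n i : ℕ} {x : Fin n} :
    x ∈ SS n i ↔
      (if i < n - 6 then ¬(i+1 ≤ (x:ℕ) ∧ (x:ℕ) ≤ i+5)
       else if i = n - 6 then 0 ≤ (x:ℕ) ∧ (x:ℕ) ≤ n-4
       else 3 ≤ (x:ℕ) ∧ (x:ℕ) ≤ n-1) := by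
  unfold SS pI cI
  split_ifs <;> simp [Finset.mem_filter]

/-- pivot variable -/
def cv (n i : ℕ) : ℕ := if i < n - 6 then i+5 else if i = n - 6 then n-1 else 0

lemma cv_lt {n i : ℕ} (hn : 7 ≤ n) (hi : i < n - 4) : cv n i < n := by
  unfold cv; split_ifs <;> omega

lemma L1 {n : ℕ} (hn : 7 ≤ n) {i j : ℕ} (hi : i < n - 4) (hj : j < n - 4) (hij : i ≠ j) :
    ∃ x : Fin n, x ∈ SS n j ∧ x ∉ SS n i := by
  by_cases hi6 : i < n - 6 <;> by_cases hj6 : j < n - 6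
  · rcases Nat.lt_or_ge i j with h | h
    · have hv : i + 1 < n := by omega
      refine ⟨⟨i+1, hv⟩, ?_, ?_⟩ <;> rw [mem_SS] <;>
        simp only [Fin.val_mk] <;> split_ifs <;> omega
    · have hv : i + 5 < n := by omega
      refine ⟨⟨i+5, hv⟩, ?_, ?_⟩ <;> rw [mem_SS] <;>
        simp only [Fin.val_mk] <;> split_ifs <;> omega
  · by_cases hj' : j = n - 6
    · have hv : i + 1 < n := by omega
      refine ⟨⟨i+1, hv⟩, ?_, ?_⟩ <;> rw [mem_SS] <;>
        simp only [Fin.val_mk] <;> split_ifs <;> omega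
    · have hv : i + 5 < n := by omega
      refine ⟨⟨i+5, hv⟩, ?_, ?_⟩ <;> rw [mem_SS] <;>
        simp only [Fin.val_mk] <;> split_ifs <;> omega
  · by_cases hi' : i = n - 6
    · have hv : n - 1 < n := by omega
      refine ⟨⟨n-1, hv⟩, ?_, ?_⟩ <;> rw [mem_SS] <;>
        simp only [Fin.val_mk] <;> split_ifs <;> omega
    · have hv : 0 < n := by omega
      refine ⟨⟨0, hv⟩, ?_, ?_⟩ <;> rw [mem_SS] <;>
        simp only [Fin.val_mk] <;> split_ifs <;> omega
  · by_cases hi' : i = n - 6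
    · have hv : n - 1 < n := by omega
      refine ⟨⟨n-1, hv⟩, ?_, ?_⟩ <;> rw [mem_SS] <;>
        simp only [Fin.val_mk] <;> split_ifs <;> omega
    · have hv : 0 < n := by omega
      refine ⟨⟨0, hv⟩, ?_, ?_⟩ <;> rw [mem_SS] <;>
        simp only [Fin.val_mk] <;> split_ifs <;> omega

lemma P1 {n : ℕ} (hn : 7 ≤ n) {i j : ℕ} (hi : i < n - 4) (hj : j < i) :
    (⟨cv n i, cv_lt hn hi⟩ : Fin n) ∈ SS n j := by
  rw [mem_SS]; unfold cv
  simp only [Fin.val_mk]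
  split_ifs <;> omega

lemma P2 {n : ℕ} (hn : 7 ≤ n) {i : ℕ} (hi : i < n - 4) :
    (⟨cv n i, cv_lt hn hi⟩ : Fin n) ∉ SS n i := by
  rw [mem_SS]; unfold cv
  simp only [Fin.val_mk]
  split_ifs <;> omega

lemma P3 {n : ℕ} (hn : 7 ≤ n) {i : ℕ} (hi0 : 0 < i) (hi : i < n - 4) :
    ∃ j, j < i ∧ ∀ x : Fin n, x ∈ SS n j → x ∈ SS n i ∨ (x:ℕ) = cv n i := by
  refine ⟨if i < n - 6 then i-1 else if i = n - 6 then n-7 else 0, by split_ifs <;> omega, ?_⟩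
  intro x
  have hxn := x.isLt
  simp only [mem_SS, cv]
  split_ifs <;> omega

end LQAux

open LQAux in
/-- For `n ≥ 7`, the complementary ideal `I^c(P_n²)` has linear quotients. -/
theorem complIdeal_hasLinearQuotients (k : Type*) [Field k] (n : ℕ) (hn : 7 ≤ n) :
    HasLinearQuotients (Ideal.span (complGens k n)) := by
  classical
  let m : Fin (n-4) → MvPolynomial (Fin n) k := fun i => monomial (indF (SS n (i:ℕ))) 1
  have hm : ∀ i, m i = monomial (indF (SS n (i:ℕ))) 1 := fun _ => rfl
  -- injectivity
  have hinj : Function.Injective m := by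
    intro i j hij
    by_contra hne
    have hd : indF (SS n (i:ℕ)) = indF (SS n (j:ℕ)) :=
      monomial_left_injective one_ne_zero hij
    have hSS := indF_inj hd
    obtain ⟨x, hxj, hxi⟩ := L1 hn i.isLt j.isLt (fun h => hne (Fin.ext h))
    exact hxi (hSS ▸ hxj)
  -- range
  have hrange : Set.range m = complGens k n := by
    ext q
    simp only [Set.mem_range, complGens, Set.mem_union, Set.mem_insert_iff,
      Set.mem_singleton_iff, Set.mem_setOf_eq]
    constructor
    · rintro ⟨i, rfl⟩
      have hi := i.isLt
      by_cases h1 : (i:ℕ) < n - 6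
      · right
        refine ⟨(i:ℕ)+1, by omega, by omega, ?_⟩
        have e1 : (i:ℕ)+1+4 = (i:ℕ)+5 := by omega
        rw [e1, coProdIcc_eq, hm]
        have hS : SS n (i:ℕ) = cI n ((i:ℕ)+1) ((i:ℕ)+5) := by
          unfold SS; rw [if_pos h1]
        rw [hS]
      · by_cases h2 : (i:ℕ) = n - 6
        · left; left
          rw [prodIcc_eq, hm]
          have hS : SS n (i:ℕ) = pI n 0 (n-4) := by
            unfold SS; rw [if_neg h1, if_pos h2]
          rw [hS]
        · left; right
          rw [prodIcc_eq, hm]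
          have hS : SS n (i:ℕ) = pI n 3 (n-1) := by
            unfold SS; rw [if_neg h1, if_neg h2]
          rw [hS]
    · rintro ((rfl | rfl) | ⟨a, ha1, ha2, rfl⟩)
      · refine ⟨⟨n-6, by omega⟩, ?_⟩
        rw [prodIcc_eq, hm]
        have hS : SS n ((⟨n-6, by omega⟩ : Fin (n-4)):ℕ) = pI n 0 (n-4) := by
          unfold SS
          rw [if_neg (by simp), if_pos (by simp)]
        rw [hS]
      · refine ⟨⟨n-5, by omega⟩, ?_⟩
        rw [prodIcc_eq, hm]
        have hS : SS n ((⟨n-5, by omega⟩ : Fin (n-4)):ℕ) = pI n 3 (n-1) := by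
          unfold SS
          rw [if_neg (by simp; omega), if_neg (by simp; omega)]
        rw [hS]
      · refine ⟨⟨a-1, by omega⟩, ?_⟩
        rw [coProdIcc_eq, hm]
        have hS : SS n ((⟨a-1, by omega⟩ : Fin (n-4)):ℕ) = cI n a (a+4) := by
          unfold SS
          rw [if_pos (by simp; omega)]
          have e1 : a-1+1 = a := by omega
          have e2 : a-1+5 = a+4 := by omega
          simp only [Fin.val_mk, e1, e2]
        rw [hS]
  -- minimality
  have hmin : ∀ i, m i ∉ Ideal.span (Set.range m \ {m i}) := by
    intro i hmem
    have hset : Set.range m \ {m i} =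
        (fun s => monomial s (1:k)) ''
          ((fun j : Fin (n-4) => indF (SS n (j:ℕ))) '' {j | j ≠ i}) := by
      ext q
      simp only [Set.mem_diff, Set.mem_range, Set.mem_singleton_iff, Set.mem_image,
        Set.mem_setOf_eq]
      constructor
      · rintro ⟨⟨j, rfl⟩, hne⟩
        exact ⟨indF (SS n (j:ℕ)), ⟨j, fun h => hne (by rw [h]), rfl⟩, rfl⟩
      · rintro ⟨t, ⟨j, hji, rfl⟩, rfl⟩
        exact ⟨⟨j, rfl⟩, fun h => hji (hinj h)⟩
    rw [hset, mem_ideal_span_monomial_image] at hmem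
    have hsup : (m i).support = {indF (SS n (i:ℕ))} := by
      rw [hm, support_monomial, if_neg one_ne_zero]
    obtain ⟨t, ht, hle⟩ := hmem (indF (SS n (i:ℕ))) (by rw [hsup]; exact Finset.mem_singleton_self _)
    obtain ⟨j, hji, rfl⟩ := ht
    have hsub : SS n (j:ℕ) ⊆ SS n (i:ℕ) := indF_le_iff.1 hle
    obtain ⟨x, hxj, hxi⟩ := L1 hn i.isLt j.isLt (fun h => hji (Fin.ext h.symm))
    exact hxi (hsub hxj)
  -- colon
  have hcolon : ∀ i : Fin (n-4), ∃ V : Set (Fin n),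
      Submodule.colon (Ideal.span {q | ∃ j : Fin (n-4), j < i ∧ q = m j})
        (Submodule.span (MvPolynomial (Fin n) k) {m i}) = Ideal.span (X '' V) := by
    intro i
    by_cases hi0 : (i:ℕ) = 0
    · refine ⟨∅, ?_⟩
      have hset : {q | ∃ j : Fin (n-4), j < i ∧ q = m j} =
          (∅ : Set (MvPolynomial (Fin n) k)) := by
        ext q
        simp only [Set.mem_setOf_eq, Set.mem_empty_iff_false, iff_false, not_exists]
        rintro j ⟨hj, -⟩
        have := Fin.lt_def.mp hj
        omega
      rw [hset]
      exact colon_bot _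
    · have hc : cv n (i:ℕ) < n := cv_lt hn i.isLt
      set c : Fin n := ⟨cv n (i:ℕ), hc⟩ with hcdef
      refine ⟨{c}, ?_⟩
      have hset : {q | ∃ j : Fin (n-4), j < i ∧ q = m j} =
          (fun s => monomial s (1:k)) ''
            ((fun j : Fin (n-4) => indF (SS n (j:ℕ))) '' {j | j < i}) := by
        ext q
        simp only [Set.mem_setOf_eq, Set.mem_image]
        constructor
        · rintro ⟨j, hj, rfl⟩; exact ⟨_, ⟨j, hj, rfl⟩, rfl⟩
        · rintro ⟨t, ⟨j, hj, rfl⟩, rfl⟩; exact ⟨j, hj, rfl⟩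
      rw [hset]
      refine colon_eq _ _ c ?_ ?_ ?_
      · rintro g ⟨j, hj, rfl⟩
        have hP := P1 hn i.isLt (Fin.lt_def.mp hj)
        rw [indF_apply, if_pos hP]
        exact one_ne_zero
      · rw [indF_apply, if_neg (P2 hn i.isLt)]
      · obtain ⟨j, hj, hsub⟩ := P3 hn (Nat.pos_of_ne_zero hi0) i.isLt
        have hj4 : j < n - 4 := by have := i.isLt; omega
        refine ⟨indF (SS n j), ⟨⟨j, hj4⟩, Fin.lt_def.mpr hj, rfl⟩, ?_⟩
        intro x
        simp only [Finsupp.add_apply, Finsupp.single_apply, indF_apply]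
        by_cases hx : x ∈ SS n j
        · rcases hsub x hx with hxi | hxc
          · rw [if_pos hx, if_pos hxi]
            exact Nat.le_add_right 1 _
          · have hcx : c = x := Fin.ext hxc.symm
            rw [if_pos hx, if_pos hcx]
            exact Nat.le_add_left 1 _
        · rw [if_neg hx]
          exact Nat.zero_le _
  exact ⟨n-4, m, hinj, by rw [hrange], hmin, hcolon⟩

end
end

section
/- For n ≥ 7, the h-vector of the simplicial complex NI[P_n^2] is (1, n-5, -4, 2, 0, 0). -/
noncomputable section

/-- `fVec n i` is the number of faces of `NI[P_n²]` with exactly `i` elements,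
i.e. the entry `f_{i-1}` of the `f`-vector. -/
def fVec (n i : ℕ) : ℕ :=
  ((niComplex n).filter (fun A => A.card = i)).card

lemma mem_niComplex {m : ℕ} (A : Finset (Fin m)) :
    A ∈ niComplex m ↔ (∀ x ∈ A, (x : ℕ) ≤ 2) ∨ (∀ x ∈ A, m - 3 ≤ (x : ℕ)) ∨
      ∃ a, 1 ≤ a ∧ a ≤ m - 6 ∧ ∀ x ∈ A, a ≤ (x : ℕ) ∧ (x : ℕ) ≤ a + 4 := by
  rw [niComplex, Finset.mem_filter]
  simp only [niComplex, niFacets, Finset.mem_filter, Finset.mem_univ, true_and,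
    Finset.mem_insert, Finset.mem_image, Finset.mem_Icc]
  constructor
  · rintro ⟨F, (rfl | rfl | ⟨a, ⟨ha1, ha2⟩, rfl⟩), hAF⟩
    · left; intro x hx; exact ((Finset.mem_filter.1 (hAF hx)).2).2
    · right; left; intro x hx; exact ((Finset.mem_filter.1 (hAF hx)).2).1
    · right; right; exact ⟨a, ha1, ha2, fun x hx => (Finset.mem_filter.1 (hAF hx)).2⟩
  · rintro (h | h | ⟨a, ha1, ha2, h⟩)
    · exact ⟨faceIcc m 0 2, Or.inl rfl, fun x hx => by
        simp only [faceIcc, Finset.mem_filter, Finset.mem_univ, true_and]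
        exact ⟨Nat.zero_le _, h x hx⟩⟩
    · exact ⟨faceIcc m (m-3) (m-1), Or.inr (Or.inl rfl), fun x hx => by
        simp only [faceIcc, Finset.mem_filter, Finset.mem_univ, true_and]
        exact ⟨h x hx, by omega⟩⟩
    · exact ⟨faceIcc m a (a+4), Or.inr (Or.inr ⟨a, ⟨ha1, ha2⟩, rfl⟩), fun x hx => by
        simp only [faceIcc, Finset.mem_filter, Finset.mem_univ, true_and]
        exact h x hx⟩

def eEmb (n : ℕ) : Fin n ↪ Fin (n + 1) :=
  ⟨fun j => ⟨(j : ℕ), by omega⟩, fun a b h => by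
    apply Fin.ext; simpa [Fin.ext_iff] using h⟩

def e6 (n : ℕ) (hn : 7 ≤ n) : Fin 6 ↪ Fin (n + 1) :=
  ⟨fun j => ⟨n - 5 + (j : ℕ), by omega⟩, fun a b h => by
    apply Fin.ext
    simp only [Fin.mk.injEq] at h
    omega⟩

@[simp] lemma eEmb_val (n : ℕ) (j : Fin n) : ((eEmb n j : Fin (n+1)) : ℕ) = (j : ℕ) := rfl
@[simp] lemma e6_val (n : ℕ) (hn : 7 ≤ n) (j : Fin 6) :
    ((e6 n hn j : Fin (n+1)) : ℕ) = n - 5 + (j : ℕ) := rfl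

def mapE {α β : Type*} (f : α ↪ β) : Finset α ↪ Finset β :=
  ⟨Finset.map f, Finset.map_injective f⟩

@[simp] lemma mapE_apply {α β : Type*} (f : α ↪ β) (s : Finset α) :
    mapE f s = s.map f := rfl

def newN : Finset (Finset (Fin 6)) :=
  Finset.univ.filter (fun B =>
    ((5 : Fin 6) ∈ B ∧ ∀ x ∈ B, 3 ≤ (x : ℕ)) ∨
    ((4 : Fin 6) ∈ B ∧ (5 : Fin 6) ∉ B ∧ ∃ x ∈ B, (x : ℕ) ≤ 1))

lemma map_preimage_e {n : ℕ} (C : Finset (Fin (n+1))) (h : ∀ x ∈ C, (x : ℕ) < n) :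
    (Finset.univ.filter (fun y : Fin n => eEmb n y ∈ C)).map (eEmb n) = C := by
  ext x
  simp only [Finset.mem_map, Finset.mem_filter, Finset.mem_univ, true_and]
  constructor
  · rintro ⟨y, hy, rfl⟩; exact hy
  · intro hx
    refine ⟨⟨(x : ℕ), h x hx⟩, ?_, ?_⟩
    · have he : eEmb n ⟨(x : ℕ), h x hx⟩ = x := Fin.ext rfl
      rw [he]; exact hx
    · apply Fin.ext; rfl

lemma map_preimage_e6 {n : ℕ} (hn : 7 ≤ n) (C : Finset (Fin (n+1)))
    (h : ∀ x ∈ C, n - 5 ≤ (x : ℕ)) :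
    (Finset.univ.filter (fun j : Fin 6 => e6 n hn j ∈ C)).map (e6 n hn) = C := by
  ext x
  simp only [Finset.mem_map, Finset.mem_filter, Finset.mem_univ, true_and]
  constructor
  · rintro ⟨j, hj, rfl⟩; exact hj
  · intro hx
    have h1 := h x hx
    have h2 : (x : ℕ) < n + 1 := x.isLt
    refine ⟨⟨(x : ℕ) - (n - 5), by omega⟩, ?_, ?_⟩
    · convert hx using 1; apply Fin.ext; simp; omega
    · apply Fin.ext; simp; omega

open Fin.NatCast in
lemma key (n : ℕ) (hn : 7 ≤ n) :
    niComplex (n+1) = (niComplex n).map (mapE (eEmb n)) ∪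
      newN.map (mapE (e6 n hn)) := by
  ext C
  simp only [Finset.mem_union, Finset.mem_map, mapE_apply]
  constructor
  · intro hC
    rw [mem_niComplex] at hC
    -- helper to produce the left branch
    have mkleft : (∀ x ∈ C, (x:ℕ) < n) →
        ((∀ x ∈ C, (x:ℕ) ≤ 2) ∨ (∀ x ∈ C, n - 3 ≤ (x:ℕ)) ∨
          ∃ a, 1 ≤ a ∧ a ≤ n - 6 ∧ ∀ x ∈ C, a ≤ (x:ℕ) ∧ (x:ℕ) ≤ a + 4) →
        ∃ A ∈ niComplex n, A.map (eEmb n) = C := by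
      intro hlt hcond
      refine ⟨_, ?_, map_preimage_e C hlt⟩
      rw [mem_niComplex]
      rcases hcond with h | h | ⟨a, ha1, ha2, h⟩
      · left; intro y hy
        simp only [Finset.mem_filter, Finset.mem_univ, true_and] at hy
        simpa using h _ hy
      · right; left; intro y hy
        simp only [Finset.mem_filter, Finset.mem_univ, true_and] at hy
        simpa using h _ hy
      · right; right
        refine ⟨a, ha1, ha2, fun y hy => ?_⟩
        simp only [Finset.mem_filter, Finset.mem_univ, true_and] at hy
        simpa using h _ hy
    have mkright : (∀ x ∈ C, n - 5 ≤ (x:ℕ)) →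
        (((n : Fin (n+1)) ∈ C ∧ ∀ x ∈ C, n - 2 ≤ (x:ℕ)) ∨
         ((∃ x ∈ C, (x:ℕ) = n - 1) ∧ (∀ x ∈ C, (x:ℕ) ≤ n - 1) ∧ ∃ x ∈ C, (x:ℕ) ≤ n - 4)) →
        ∃ B ∈ newN, B.map (e6 n hn) = C := by
      intro hge hcond
      refine ⟨_, ?_, map_preimage_e6 hn C hge⟩
      simp only [newN, Finset.mem_filter, Finset.mem_univ, true_and]
      rcases hcond with ⟨hmem, hall⟩ | ⟨⟨z, hz, hz1⟩, hb, ⟨w, hw, hw1⟩⟩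
      · left
        constructor
        · convert hmem using 1; apply Fin.ext
          simp
          omega
        · intro j hj
          have := hall _ hj
          simp at this
          omega
      · right
        refine ⟨?_, ?_, ?_⟩
        · have hze : z = e6 n hn 4 := by apply Fin.ext; simp; omega
          rwa [hze] at hz
        · intro hmem
          have := hb _ hmem
          simp at this
          omega
        · have hwv := hge w hw
          refine ⟨⟨(w:ℕ) - (n-5), by omega⟩, ?_, by simp; omega⟩
          convert hw using 1; apply Fin.ext; simp; omega
    rcases hC with h | h | ⟨a, ha1, ha2, h⟩
    · -- all ≤ 2
      left
      exact mkleft (fun x hx => by have := h x hx; omega) (Or.inl h)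
    · -- all ≥ n+1-3 = n-2
      by_cases hnC : (n : Fin (n+1)) ∈ C
      · right
        refine mkright (fun x hx => by have := h x hx; omega) (Or.inl ⟨hnC, fun x hx => by
          have := h x hx; omega⟩)
      · left
        refine mkleft (fun x hx => ?_) (Or.inr (Or.inl (fun x hx => by have := h x hx; omega)))
        have hx1 : (x:ℕ) < n + 1 := x.isLt
        rcases Nat.lt_or_ge (x:ℕ) n with h' | h'
        · exact h'
        · exfalso
          have : x = (n : Fin (n+1)) := by
            apply Fin.ext
            simp [Fin.val_natCast]
            omega
          exact hnC (this ▸ hx)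
    · -- interval a, 1 ≤ a ≤ (n+1)-6 = n-5
      have ha2' : a ≤ n - 5 := by omega
      have hlt : ∀ x ∈ C, (x:ℕ) < n := fun x hx => by have := h x hx; omega
      by_cases hmax : ∀ x ∈ C, (x:ℕ) ≤ n - 2
      · left
        refine mkleft hlt (Or.inr (Or.inr ?_))
        by_cases haa : a ≤ n - 6
        · exact ⟨a, ha1, haa, h⟩
        · refine ⟨n - 6, by omega, le_refl _, fun x hx => ?_⟩
          have := h x hx; have := hmax x hx; omega
      · push_neg at hmax
        obtain ⟨z, hz, hz2⟩ := hmax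
        have hzval : (z:ℕ) = n - 1 := by have := h z hz; have := hlt z hz; omega
        have hamin : n - 5 ≤ a := by have := h z hz; omega
        by_cases hhi : ∀ x ∈ C, n - 3 ≤ (x:ℕ)
        · left; exact mkleft hlt (Or.inr (Or.inl hhi))
        · push_neg at hhi
          obtain ⟨w, hw, hw2⟩ := hhi
          right
          refine mkright (fun x hx => by have := h x hx; omega) (Or.inr ⟨⟨z, hz, hzval⟩,
            fun x hx => by have := hlt x hx; omega, ⟨w, hw, by omega⟩⟩)
  · rintro (⟨A, hA, rfl⟩ | ⟨B, hB, rfl⟩)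
    · rw [mem_niComplex] at hA
      rw [mem_niComplex]
      rcases hA with h | h | ⟨a, ha1, ha2, h⟩
      · left; intro x hx
        simp only [Finset.mem_map] at hx
        obtain ⟨y, hy, rfl⟩ := hx
        simpa using h y hy
      · right; right
        refine ⟨n - 5, by omega, by omega, fun x hx => ?_⟩
        simp only [Finset.mem_map] at hx
        obtain ⟨y, hy, rfl⟩ := hx
        have := h y hy
        have := y.isLt
        simp
        omega
      · right; right
        refine ⟨a, ha1, by omega, fun x hx => ?_⟩
        simp only [Finset.mem_map] at hx
        obtain ⟨y, hy, rfl⟩ := hx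
        simpa using h y hy
    · simp only [newN, Finset.mem_filter, Finset.mem_univ, true_and] at hB
      rw [mem_niComplex]
      rcases hB with ⟨h5, h3⟩ | ⟨h4, h5, j, hj, hjle⟩
      · right; left
        intro x hx
        simp only [Finset.mem_map] at hx
        obtain ⟨y, hy, rfl⟩ := hx
        have := h3 y hy
        simp
        omega
      · right; right
        refine ⟨n - 5, by omega, by omega, fun x hx => ?_⟩
        simp only [Finset.mem_map] at hx
        obtain ⟨y, hy, rfl⟩ := hx
        have hy5 : (y:ℕ) ≠ 5 := by
          intro hcontra
          have : y = (5 : Fin 6) := by apply Fin.ext; simpa using hcontra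
          exact h5 (this ▸ hy)
        have := y.isLt
        simp
        omega

lemma disj (n : ℕ) (hn : 7 ≤ n) :
    Disjoint ((niComplex n).map (mapE (eEmb n)))
      (newN.map (mapE (e6 n hn))) := by
  rw [Finset.disjoint_left]
  rintro C hC hC'
  simp only [Finset.mem_map, mapE_apply] at hC hC'
  obtain ⟨A, hA, rfl⟩ := hC
  obtain ⟨B, hB, hBC⟩ := hC'
  rw [mem_niComplex] at hA
  simp only [newN, Finset.mem_filter, Finset.mem_univ, true_and] at hB
  have hvals : ∀ x ∈ A.map (eEmb n), (x:ℕ) < n := by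
    intro x hx
    simp only [Finset.mem_map] at hx
    obtain ⟨y, hy, rfl⟩ := hx
    simpa using y.isLt
  rcases hB with ⟨h5, _⟩ | ⟨h4, h5, j, hj, hjle⟩
  · have : e6 n hn 5 ∈ A.map (eEmb n) := by
      rw [← hBC]
      exact Finset.mem_map_of_mem _ h5
    have := hvals _ this
    simp at this
    omega
  · have hin4 : e6 n hn 4 ∈ A.map (eEmb n) := by
      rw [← hBC]; exact Finset.mem_map_of_mem _ h4
    have hinj : e6 n hn j ∈ A.map (eEmb n) := by
      rw [← hBC]; exact Finset.mem_map_of_mem _ hj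
    simp only [Finset.mem_map] at hin4 hinj
    obtain ⟨y1, hy1, hy1e⟩ := hin4
    obtain ⟨y2, hy2, hy2e⟩ := hinj
    have hv1 : (y1:ℕ) = n - 1 := by
      have := congrArg (fun x : Fin (n+1) => (x:ℕ)) hy1e
      simp at this
      omega
    have hv2 : (y2:ℕ) ≤ n - 4 := by
      have := congrArg (fun x : Fin (n+1) => (x:ℕ)) hy2e
      simp at this
      omega
    rcases hA with h | h | ⟨a, ha1, ha2, h⟩
    · have := h y1 hy1; omega
    · have := h y2 hy2; omega
    · have h1 := h y1 hy1
      have h2 := h y2 hy2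
      omega

lemma card_filter_card_map {α β : Type*} (f : α ↪ β) (s : Finset (Finset α)) (i : ℕ) :
    ((s.map (mapE f)).filter (fun A => A.card = i)).card =
      (s.filter (fun A => A.card = i)).card := by
  rw [Finset.filter_map, Finset.card_map]
  congr 1
  apply Finset.filter_congr
  intro A _
  simp [mapE_apply]

lemma step (n : ℕ) (hn : 7 ≤ n) (i : ℕ) :
    fVec (n+1) i = fVec n i + (newN.filter (fun B => B.card = i)).card := by
  unfold fVec
  rw [key n hn, Finset.filter_union,
    Finset.card_union_of_disjoint (Finset.disjoint_filter_filter (disj n hn)),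
    card_filter_card_map, card_filter_card_map]

lemma newN_counts :
    (newN.filter (fun B => B.card = 0)).card = 0 ∧
    (newN.filter (fun B => B.card = 1)).card = 1 ∧
    (newN.filter (fun B => B.card = 2)).card = 4 ∧
    (newN.filter (fun B => B.card = 3)).card = 6 ∧
    (newN.filter (fun B => B.card = 4)).card = 4 ∧
    (newN.filter (fun B => B.card = 5)).card = 1 := by decide

lemma fVec_base :
    fVec 7 0 = 1 ∧ fVec 7 1 = 7 ∧ fVec 7 2 = 14 ∧ fVec 7 3 = 12 ∧
      fVec 7 4 = 5 ∧ fVec 7 5 = 1 := by decide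

lemma fVec_formula (n : ℕ) (hn : 7 ≤ n) :
    fVec n 0 = 1 ∧ fVec n 1 = n ∧ fVec n 2 = 4*n - 14 ∧ fVec n 3 = 6*n - 30 ∧
      fVec n 4 = 4*n - 23 ∧ fVec n 5 = n - 6 := by
  induction n, hn using Nat.le_induction with
  | base => exact fVec_base
  | succ n hn ih =>
    obtain ⟨h0, h1, h2, h3, h4, h5⟩ := ih
    obtain ⟨c0, c1, c2, c3, c4, c5⟩ := newN_counts
    rw [step n hn 0, step n hn 1, step n hn 2, step n hn 3, step n hn 4, step n hn 5,
      c0, c1, c2, c3, c4, c5, h0, h1, h2, h3, h4, h5]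
    omega

/-- The `h`-vector, defined from the `f`-vector by
`h_i = ∑_{j=0}^{i} (-1)^{i-j} C(d-j, i-j) f_{j-1}` with `d = 5`. -/
def hVec (n i : ℕ) : ℤ :=
  ∑ j ∈ Finset.range (i + 1),
    (-1 : ℤ) ^ (i - j) * (Nat.choose (5 - j) (i - j)) * fVec n j

/-- For `n ≥ 7`, the `h`-vector of `NI[P_n²]` is `(1, n-5, -4, 2, 0, 0)`. -/
theorem hVector_niComplex (n : ℕ) (hn : 7 ≤ n) :
    hVec n 0 = 1 ∧ hVec n 1 = (n : ℤ) - 5 ∧ hVec n 2 = -4 ∧ hVec n 3 = 2 ∧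
      hVec n 4 = 0 ∧ hVec n 5 = 0 := by
  obtain ⟨h0, h1, h2, h3, h4, h5⟩ := fVec_formula n hn
  simp only [hVec, Finset.sum_range_succ, Finset.sum_range_zero]
  norm_num
  rw [h0, h1, h2, h3, h4, h5]
  norm_num [show Nat.choose 5 1 = 5 from by decide, show Nat.choose 5 2 = 10 from by decide,
    show Nat.choose 5 3 = 10 from by decide, show Nat.choose 5 4 = 5 from by decide,
    show Nat.choose 5 5 = 1 from by decide, show Nat.choose 4 1 = 4 from by decide,
    show Nat.choose 4 2 = 6 from by decide, show Nat.choose 4 3 = 4 from by decide,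
    show Nat.choose 4 4 = 1 from by decide, show Nat.choose 3 1 = 3 from by decide,
    show Nat.choose 3 2 = 3 from by decide, show Nat.choose 3 3 = 1 from by decide,
    show Nat.choose 2 1 = 2 from by decide, show Nat.choose 2 2 = 1 from by decide,
    show Nat.choose 1 1 = 1 from by decide]
  refine ⟨?_, ?_, ?_, ?_, ?_⟩ <;> push_cast <;> omega

end
end
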